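/- Let $(X,\mu)$ and $(Y,\nu)$ be $\sigma$-finite measure spaces with $(X,\mu)$ non-atomic, and let $D \subseteq X \times Y$ be measurable with $0 < (\mu\times\nu)(D) < \infty$. Then for every $\varepsilon>0$ there exist a measurable set $D_Y \subseteq Y$ and infinitely many pairwise disjoint measurable subsets $\{D_n\}_{n\in\mathbb{N}}$ of $X$ such that for all $n$, $(\mu\times\nu)((D_n \times D_Y)\setminus D) < \varepsilon \cdot (\mu\times\nu)(D_n\times D_Y) < \infty$. -/

import Mathlib

open MeasureTheory
open scoped ENNReal

/-- A measure is non-atomic if every measurable set of positive measure has a measurable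
subset of strictly smaller positive measure. -/
def NonAtomicMeasure {Z : Type*} [MeasurableSpace Z] (lam : Measure Z) : Prop :=
  ∀ s : Set Z, MeasurableSet s → 0 < lam s →
    ∃ t ⊆ s, MeasurableSet t ∧ 0 < lam t ∧ lam t < lam s

/-!
Fix `0 < η < min ε 1`. Finite disjoint unions of measurable rectangles are dense in measure, so
some such union `s` has `(μ × ν)(D ∆ s) < η (μ × ν)(D)`; then `(μ × ν)(s \ D) < η (μ × ν)(s)`,
and by pigeonhole one rectangle `A × B` of `s` satisfies the same inequality. By Markov's
inequality the points `x ∈ A` whose bad section `((A × B) \ D)_x` has `ν`-measure `< η ν(B)` form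
a set of positive measure, which non-atomicity cuts into infinitely many disjoint pieces `D_n`;
then `(μ × ν)((D_n × B) \ D) ≤ η μ(D_n) ν(B) < ε μ(D_n) ν(B)`.
-/

open Set
open scoped symmDiff

theorem MeasureTheory.IsSetSemiring.generateSetAlgebra_subset_supClosure {α : Type*}
    {C : Set (Set α)} (hC : IsSetSemiring C) (huniv : univ ∈ C) :
    generateSetAlgebra C ⊆ supClosure C :=
  have hring := hC.isSetRing_supClosure
  IsSetAlgebra.generateSetAlgebra_subset subset_supClosure
    { empty_mem := hring.empty_mem
      compl_mem := fun s hs =>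
        compl_eq_univ_sdiff s ▸ hring.sdiff_mem (subset_supClosure huniv) hs
      union_mem := hring.union_mem }

section

variable {X Y : Type*} [MeasurableSpace X] [MeasurableSpace Y]

theorem isSetSemiring_measurableRectangles :
    IsSetSemiring
      (image2 (· ×ˢ ·) {s : Set X | MeasurableSet s} {t : Set Y | MeasurableSet t}) where
  empty_mem := ⟨∅, .empty, ∅, .empty, prod_empty⟩
  inter_mem := by
    rintro _ ⟨A₁, hA₁, B₁, hB₁, rfl⟩ _ ⟨A₂, hA₂, B₂, hB₂, rfl⟩
    exact ⟨A₁ ∩ A₂, hA₁.inter hA₂, B₁ ∩ B₂, hB₁.inter hB₂, prod_inter_prod.symm⟩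
  sdiff_eq_sUnion' := by
    rintro _ ⟨A₁, hA₁, B₁, hB₁, rfl⟩ _ ⟨A₂, hA₂, B₂, hB₂, rfl⟩
    classical
    refine ⟨{(A₁ \ A₂) ×ˢ B₁, (A₁ ∩ A₂) ×ˢ (B₁ \ B₂)}, ?_, ?_, ?_⟩
    · simp only [Finset.coe_insert, Finset.coe_singleton, insert_subset_iff,
        singleton_subset_iff]
      exact ⟨mem_image2_of_mem (hA₁.diff hA₂) hB₁,
        mem_image2_of_mem (hA₁.inter hA₂) (hB₁.diff hB₂)⟩
    · rw [Finset.coe_pair]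
      have h : Disjoint ((A₁ \ A₂) ×ˢ B₁) ((A₁ ∩ A₂) ×ˢ (B₁ \ B₂)) :=
        disjoint_prod.mpr (.inl disjoint_sdiff_inter)
      exact pairwise_pair.mpr fun _ => ⟨h, h.symm⟩
    · ext ⟨x, y⟩
      simp only [Finset.coe_insert, Finset.coe_singleton, sUnion_insert, sUnion_singleton,
        mem_sdiff, mem_prod, mem_union, mem_inter_iff]
      tauto

theorem exists_mem_supClosure_measure_symmDiff_lt (μ : Measure X) (ν : Measure Y)
    [SigmaFinite μ] [SigmaFinite ν] {D : Set (X × Y)} (hD : MeasurableSet D)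
    (hfin : μ.prod ν D ≠ ∞) {δ : ℝ≥0∞} (hδ : 0 < δ) :
    ∃ s ∈ supClosure
        (image2 (· ×ˢ ·) {s : Set X | MeasurableSet s} {t : Set Y | MeasurableSet t}),
      μ.prod ν (D ∆ s) < δ := by
  obtain ⟨r, -, hr, hrδ⟩ := ENNReal.lt_iff_exists_real_btwn.mp hδ
  have hdense : (μ.prod ν).MeasureDense (generateSetAlgebra
      (image2 (· ×ˢ ·) {s : Set X | MeasurableSet s} {t : Set Y | MeasurableSet t})) :=
    .of_generateFrom_isSetAlgebra_sigmaFinite isSetAlgebra_generateSetAlgebra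
      ((μ.toFiniteSpanningSetsIn.prod ν.toFiniteSpanningSetsIn).mono
        self_subset_generateSetAlgebra)
      (by rw [generateFrom_generateSetAlgebra_eq, generateFrom_prod])
  obtain ⟨s, hs, hDs⟩ := hdense.approx D hD hfin r (ENNReal.ofReal_pos.mp hr)
  exact ⟨s, isSetSemiring_measurableRectangles.generateSetAlgebra_subset_supClosure
    ⟨univ, .univ, univ, .univ, univ_prod_univ⟩ hs, hDs.trans hrδ⟩

theorem measure_sdiff_lt_mul_of_measure_symmDiff_lt {μ : Measure X} {s D : Set X}
    (hs : MeasurableSet s) (hD : MeasurableSet D) {η : ℝ≥0∞} (hη : η ≤ 1)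
    (h : μ (D ∆ s) < η * μ D) : μ (s \ D) < η * μ s := by
  by_contra! hle
  refine h.not_ge ?_
  calc η * μ D ≤ η * (μ (D \ s) + μ s) :=
        mul_le_mul_right ((measure_mono (subset_sdiff_union D s)).trans (measure_union_le _ _)) η
    _ = η * μ (D \ s) + η * μ s := mul_add _ _ _
    _ ≤ μ (D \ s) + μ (s \ D) := add_le_add (mul_le_of_le_one_left' hη) hle
    _ = μ (D ∆ s) := (measure_symmDiff_eq hD.nullMeasurableSet hs.nullMeasurableSet).symm

theorem Finpartition.exists_measure_sdiff_lt_mul {μ : Measure X} {s D : Set X}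
    (P : Finpartition s) (hP : ∀ t ∈ P.parts, MeasurableSet t) (hD : MeasurableSet D)
    {η : ℝ≥0∞} (h : μ (s \ D) < η * μ s) : ∃ t ∈ P.parts, μ (t \ D) < η * μ t := by
  by_contra! hle
  have hs : ⋃ t ∈ P.parts, t = s := by rw [← Finset.sup_set_eq_biUnion]; exact P.sup_parts
  have hs_sdiff : ⋃ t ∈ P.parts, t \ D = s \ D := by
    conv_rhs => rw [← hs]
    simp only [iUnion_sdiff]
  have hsum : μ s = ∑ t ∈ P.parts, μ t :=
    calc μ s = μ (⋃ t ∈ P.parts, t) := by rw [hs]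
      _ = ∑ t ∈ P.parts, μ t := measure_biUnion_finset P.disjoint hP
  have hsum_sdiff : μ (s \ D) = ∑ t ∈ P.parts, μ (t \ D) :=
    calc μ (s \ D) = μ (⋃ t ∈ P.parts, t \ D) := by rw [hs_sdiff]
      _ = ∑ t ∈ P.parts, μ (t \ D) :=
        measure_biUnion_finset (P.disjoint.mono fun _ => sdiff_subset)
          fun t ht => (hP t ht).diff hD
  refine h.not_ge ?_
  rw [hsum, hsum_sdiff, Finset.mul_sum]
  exact Finset.sum_le_sum hle

theorem exists_prod_measure_sdiff_lt_mul (μ : Measure X) (ν : Measure Y)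
    [SigmaFinite μ] [SigmaFinite ν] {D : Set (X × Y)} (hD : MeasurableSet D)
    (hpos : 0 < μ.prod ν D) (hfin : μ.prod ν D ≠ ∞) {η : ℝ≥0∞} (hη0 : 0 < η) (hη1 : η ≤ 1) :
    ∃ A, MeasurableSet A ∧ ∃ B, MeasurableSet B ∧
      μ A * ν B < ∞ ∧ μ.prod ν ((A ×ˢ B) \ D) < η * (μ A * ν B) := by
  obtain ⟨s, hs, hDs⟩ :=
    exists_mem_supClosure_measure_symmDiff_lt μ ν hD hfin (ENNReal.mul_pos hη0.ne' hpos.ne')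
  have hs_meas : MeasurableSet s :=
    generateFrom_prod (α := X) (β := Y) ▸ measurableSet_generateFrom_of_mem_supClosure hs
  have hs_fin : μ.prod ν s < ∞ :=
    calc μ.prod ν s ≤ μ.prod ν (D ∆ s) + μ.prod ν D :=
          (measure_mono (le_symmDiff_sup_left D s)).trans (measure_union_le _ _)
      _ < ∞ := ENNReal.add_lt_top.mpr
          ⟨hDs.trans_le ((mul_le_of_le_one_left' hη1).trans_lt hfin.lt_top).le, hfin.lt_top⟩
  obtain ⟨P, hPC⟩ := isSetSemiring_measurableRectangles.mem_supClosure_iff.mp hs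
  have hP_meas : ∀ t ∈ P.parts, MeasurableSet t := fun t ht => by
    obtain ⟨A, hA, B, hB, rfl⟩ := hPC ht
    exact hA.prod hB
  obtain ⟨R, hR, hRD⟩ := P.exists_measure_sdiff_lt_mul hP_meas hD
    (measure_sdiff_lt_mul_of_measure_symmDiff_lt hs_meas hD hη1 hDs)
  obtain ⟨A, hA, B, hB, rfl⟩ := hPC hR
  rw [Measure.prod_prod] at hRD
  refine ⟨A, hA, B, hB, ?_, hRD⟩
  rw [← Measure.prod_prod]
  exact (measure_mono (P.le hR)).trans_lt hs_fin

theorem measure_inter_setOf_lt_pos_of_lintegral_lt {μ : Measure X} {f : X → ℝ≥0∞}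
    {A : Set X} (hA : MeasurableSet A) {c : ℝ≥0∞} (h : ∫⁻ x, f x ∂μ < c * μ A) :
    0 < μ (A ∩ {x | f x < c}) := by
  refine pos_iff_ne_zero.mpr fun h0 => h.not_ge ?_
  have hae : ∀ᵐ x ∂μ.restrict A, c ≤ f x := by
    rw [ae_restrict_iff' hA, ae_iff]
    simp only [Classical.not_imp, not_le]
    exact h0
  calc c * μ A = ∫⁻ _ in A, c ∂μ := (setLIntegral_const A c).symm
    _ ≤ ∫⁻ x in A, f x ∂μ := lintegral_mono_ae hae
    _ ≤ ∫⁻ x, f x ∂μ := setLIntegral_le_lintegral A f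

theorem MeasureTheory.Measure.prod_inter_prod_univ_le (μ : Measure X) (ν : Measure Y)
    [SFinite μ] [SFinite ν] {E : Set (X × Y)} (hE : MeasurableSet E) {S : Set X} {c : ℝ≥0∞}
    (h : ∀ x ∈ S, ν (Prod.mk x ⁻¹' E) ≤ c) : μ.prod ν (E ∩ S ×ˢ univ) ≤ c * μ S :=
  calc μ.prod ν (E ∩ S ×ˢ univ) = (μ.prod ν).restrict (S ×ˢ univ) E :=
        (Measure.restrict_apply hE).symm
    _ = (μ.restrict S).prod ν E := by rw [← Measure.prod_restrict, Measure.restrict_univ]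
    _ = ∫⁻ x in S, ν (Prod.mk x ⁻¹' E) ∂μ := Measure.prod_apply hE
    _ ≤ ∫⁻ _ in S, c ∂μ := setLIntegral_mono measurable_const h
    _ = c * μ S := setLIntegral_const S c

theorem NonAtomicMeasure.exists_subset_measure_pos_measure_sdiff_pos {μ : Measure X}
    (hμ : NonAtomicMeasure μ) {s : Set X} (hs : MeasurableSet s) (h : 0 < μ s) :
    ∃ t ⊆ s, MeasurableSet t ∧ 0 < μ t ∧ 0 < μ (s \ t) := by
  obtain ⟨t, hts, ht, ht0, hlt⟩ := hμ s hs h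
  refine ⟨t, hts, ht, ht0, pos_iff_ne_zero.mpr fun h0 => hlt.not_ge ?_⟩
  calc μ s ≤ μ (s \ t) + μ t :=
        (measure_mono (subset_sdiff_union s t)).trans (measure_union_le _ _)
    _ = μ t := by rw [h0, zero_add]

theorem NonAtomicMeasure.exists_pairwise_disjoint_subsets {μ : Measure X}
    (hμ : NonAtomicMeasure μ) {A : Set X} (hA : MeasurableSet A) (h : 0 < μ A) :
    ∃ Dn : ℕ → Set X, (∀ n, Dn n ⊆ A) ∧ (∀ n, MeasurableSet (Dn n)) ∧ (∀ n, 0 < μ (Dn n)) ∧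
      Pairwise (Function.onFun Disjoint Dn) := by
  choose! piece piece_subset measurableSet_piece piece_pos sdiff_piece_pos using
    fun s (hs : MeasurableSet s ∧ 0 < μ s) =>
      hμ.exists_subset_measure_pos_measure_sdiff_pos hs.1 hs.2
  set rest : ℕ → Set X := fun n => (fun s => s \ piece s)^[n] A
  have rest_succ : ∀ n, rest (n + 1) = rest n \ piece (rest n) := fun n =>
    Function.iterate_succ_apply' _ n A
  have rest_spec : ∀ n, MeasurableSet (rest n) ∧ 0 < μ (rest n) := by
    intro n
    induction n with
    | zero => exact ⟨hA, h⟩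
    | succ n ih =>
      rw [rest_succ]
      exact ⟨ih.1.diff (measurableSet_piece _ ih), sdiff_piece_pos _ ih⟩
  have rest_anti : Antitone rest := antitone_nat_of_succ_le fun n => by
    rw [rest_succ]; exact sdiff_subset
  refine ⟨fun n => piece (rest n),
    fun n => (piece_subset _ (rest_spec n)).trans (rest_anti n.zero_le),
    fun n => measurableSet_piece _ (rest_spec n), fun n => piece_pos _ (rest_spec n),
    (pairwise_disjoint_on _).mpr fun m n hmn => ?_⟩
  have : piece (rest n) ⊆ rest m \ piece (rest m) :=
    rest_succ m ▸ (piece_subset _ (rest_spec n)).trans (rest_anti hmn)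
  exact disjoint_sdiff_right.mono_right this

end

/-- If `μ` is non-atomic, a set of finite positive product measure admits a measurable
`D_Y ⊆ Y` and infinitely many pairwise disjoint measurable subsets `D_n ⊆ X` such that
each rectangle `D_n × D_Y` is almost contained in `D` up to relative measure `ε`. -/
theorem almost_rectangles_of_nonatomic
    {X Y : Type*} [MeasurableSpace X] [MeasurableSpace Y]
    (μ : Measure X) (ν : Measure Y) [SigmaFinite μ] [SigmaFinite ν]
    (hμ : NonAtomicMeasure μ)
    (D : Set (X × Y)) (hD : MeasurableSet D)
    (hpos : 0 < (μ.prod ν) D) (hfin : (μ.prod ν) D < ⊤)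
    (ε : ℝ≥0∞) (hε : 0 < ε) :
    ∃ (DY : Set Y) (Dn : ℕ → Set X), MeasurableSet DY ∧
      (∀ n, MeasurableSet (Dn n)) ∧
      Pairwise (Function.onFun Disjoint Dn) ∧
      ∀ n, (μ.prod ν) ((Dn n ×ˢ DY) \ D) < ε * (μ.prod ν) (Dn n ×ˢ DY) ∧
        (μ.prod ν) (Dn n ×ˢ DY) < ⊤ := by
  obtain ⟨η, hη0, hη⟩ := exists_between (lt_min hε zero_lt_one)
  obtain ⟨A, hA, B, hB, hAB, hbad⟩ := exists_prod_measure_sdiff_lt_mul μ ν hD hpos hfin.ne hη0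
    (hη.trans_le (min_le_right _ _)).le
  set E := (A ×ˢ B) \ D
  have hE : MeasurableSet E := (hA.prod hB).diff hD
  have hgood : 0 < μ (A ∩ {x | ν (Prod.mk x ⁻¹' E) < η * ν B}) := by
    refine measure_inter_setOf_lt_pos_of_lintegral_lt hA ?_
    rwa [← Measure.prod_apply hE, mul_assoc, mul_comm (ν B)]
  obtain ⟨Dn, hDn_sub, hDn, hDn_pos, hdisj⟩ := hμ.exists_pairwise_disjoint_subsets
    (hA.inter (measurableSet_lt (measurable_measure_prodMk_left hE) measurable_const)) hgood
  refine ⟨B, Dn, hB, hDn, hdisj, fun n => ?_⟩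
  have hB0 : ν B ≠ 0 := by rintro h; simp [h] at hbad
  have hfin_n : μ (Dn n) * ν B < ⊤ :=
    (mul_le_mul_left (measure_mono ((hDn_sub n).trans inter_subset_left)) _).trans_lt hAB
  rw [Measure.prod_prod]
  refine ⟨?_, hfin_n⟩
  calc μ.prod ν ((Dn n ×ˢ B) \ D) ≤ μ.prod ν (E ∩ Dn n ×ˢ univ) :=
        measure_mono fun p hp => ⟨⟨⟨(hDn_sub n hp.1.1).1, hp.1.2⟩, hp.2⟩, hp.1.1, trivial⟩
    _ ≤ η * ν B * μ (Dn n) :=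
        Measure.prod_inter_prod_univ_le μ ν hE fun x hx => (hDn_sub n hx).2.le
    _ = η * (μ (Dn n) * ν B) := by ring
    _ < ε * (μ (Dn n) * ν B) :=
        ENNReal.mul_lt_mul_left (mul_ne_zero (hDn_pos n).ne' hB0) hfin_n.ne
          (hη.trans_le (min_le_left _ _))
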